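/- For simple digraphs Γ₁ and Γ₂, th(Γ₁ ∪ Γ₂) = th(Γ₁ᵀ ∪ Γ₂), where ∪ denotes disjoint union and Γ₁ᵀ is the transpose of Γ₁. -/

import Mathlib

open Set

/-- One time step of standard zero forcing on a digraph with arc relation `A`:
every blue vertex having a unique white out-neighbor forces it blue. -/
def dstep {V : Type*} (A : V → V → Prop) (S : Set V) : Set V :=
  S ∪ {w | ∃ u ∈ S, A u w ∧ ∀ x, A u x → x ∉ S → x = w}

/-- `B` is a zero forcing set of the digraph with arc relation `A`. -/
def IsZFS {V : Type*} (A : V → V → Prop) (B : Set V) : Prop :=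
  ∃ t, (dstep A)^[t] B = Set.univ

/-- Propagation time of `B` in the digraph with arc relation `A`. -/
noncomputable def dpt {V : Type*} (A : V → V → Prop) (B : Set V) : ℕ :=
  sInf {t | (dstep A)^[t] B = Set.univ}

/-- The throttling number of the digraph with arc relation `A`. -/
noncomputable def dth {V : Type*} (A : V → V → Prop) : ℕ :=
  sInf {k | ∃ B : Set V, IsZFS A B ∧ k = B.ncard + dpt A B}

/-- The disjoint union of two digraphs. -/
def dUnion {V₁ V₂ : Type*} (A₁ : V₁ → V₁ → Prop) (A₂ : V₂ → V₂ → Prop) :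
    V₁ ⊕ V₂ → V₁ ⊕ V₂ → Prop
  | .inl a, .inl b => A₁ a b
  | .inr a, .inr b => A₂ a b
  | _, _ => False

/-!
Components of a disjoint union are forced independently, so it suffices to turn a set `B` that
forces `A` in `t` steps into a set of the same size that forces `flip A` in `t` steps. For each
`w ∉ B` pick a vertex `u w` that forces `w` at its forcing time `d w`. Running the forces
backwards, `w` forces `u w` in `flip A` at time `t - d w + 1`, starting from the vertices that
never act as forcers; since `u` is injective on `Bᶜ`, that starting set has the size of `B`.
-/

open Function

section Forcing

variable {V : Type*} {A : V → V → Prop}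

def Forces (A : V → V → Prop) (S : Set V) (u w : V) : Prop :=
  u ∈ S ∧ A u w ∧ ∀ x, A u x → x ∉ S → x = w

lemma mem_dstep_iff {S : Set V} {w : V} : w ∈ dstep A S ↔ w ∈ S ∨ ∃ u, Forces A S u w :=
  Iff.rfl

lemma subset_dstep (S : Set V) : S ⊆ dstep A S :=
  subset_union_left

lemma dstep_mono {S T : Set V} (h : S ⊆ T) : dstep A S ⊆ dstep A T := by
  rintro w (hw | ⟨u, hu, huw, huniq⟩)
  · exact Or.inl (h hw)
  · exact Or.inr ⟨u, h hu, huw, fun x hux hxT => huniq x hux fun hxS => hxT (h hxS)⟩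

lemma monotone_iterate_dstep (S : Set V) : Monotone fun n => (dstep A)^[n] S :=
  fun _ _ h => monotone_iterate_of_id_le (fun S => subset_dstep S) h S

end Forcing

section ForceTime

variable {V : Type*} {A : V → V → Prop} {B : Set V} {t : ℕ}

noncomputable def forceTime (A : V → V → Prop) (B : Set V) (w : V) : ℕ :=
  sInf {i | w ∈ (dstep A)^[i] B}

variable (hB : (dstep A)^[t] B = univ)
include hB

lemma mem_iterate_dstep_forceTime (w : V) : w ∈ (dstep A)^[forceTime A B w] B :=
  Nat.sInf_mem (s := {i | w ∈ (dstep A)^[i] B}) ⟨t, by rw [mem_ofPred_eq, hB]; trivial⟩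

lemma mem_iterate_dstep_iff (i : ℕ) (w : V) :
    w ∈ (dstep A)^[i] B ↔ forceTime A B w ≤ i :=
  ⟨fun h => Nat.sInf_le h,
    fun h => monotone_iterate_dstep B h (mem_iterate_dstep_forceTime hB w)⟩

lemma forceTime_le (w : V) : forceTime A B w ≤ t :=
  (mem_iterate_dstep_iff hB t w).1 (hB ▸ mem_univ w)

lemma forceTime_pos {w : V} (hw : w ∉ B) : 0 < forceTime A B w :=
  Nat.pos_of_ne_zero fun h => hw ((mem_iterate_dstep_iff hB 0 w).2 h.le)

lemma exists_forces {w : V} (hw : w ∉ B) :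
    ∃ u, Forces A ((dstep A)^[forceTime A B w - 1] B) u w := by
  have hpos := forceTime_pos hB hw
  have hmem := mem_iterate_dstep_forceTime hB w
  rw [← Nat.sub_add_cancel hpos, iterate_succ_apply', mem_dstep_iff] at hmem
  exact hmem.resolve_left fun h => by have := (mem_iterate_dstep_iff hB _ w).1 h; omega

lemma forceTime_lt_of_forces {u w : V} (hw : w ∉ B)
    (h : Forces A ((dstep A)^[forceTime A B w - 1] B) u w) :
    forceTime A B u < forceTime A B w := by
  have := (mem_iterate_dstep_iff hB _ u).1 h.1
  have := forceTime_pos hB hw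
  omega

lemma eq_or_forceTime_lt_of_forces {u w x : V} (hw : w ∉ B)
    (h : Forces A ((dstep A)^[forceTime A B w - 1] B) u w) (hx : A u x) :
    x = w ∨ forceTime A B x < forceTime A B w := by
  by_cases hxS : x ∈ (dstep A)^[forceTime A B w - 1] B
  · have := (mem_iterate_dstep_iff hB _ x).1 hxS
    have := forceTime_pos hB hw
    right; omega
  · exact Or.inl (h.2.2 x hx hxS)

end ForceTime

section Reversal

variable {V : Type*} {A : V → V → Prop} {B : Set V} {t : ℕ} {u : V → V}

-- Its complement is the blue set of the reversed process at time `t - s`.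
def forcersUpTo (A : V → V → Prop) (B : Set V) (u : V → V) (s : ℕ) : Set V :=
  u '' {w | w ∉ B ∧ forceTime A B w ≤ s}

variable (hB : (dstep A)^[t] B = univ)
  (hu : ∀ w ∉ B, Forces A ((dstep A)^[forceTime A B w - 1] B) (u w) w)
include hB hu

lemma injOn_forcer : InjOn u Bᶜ := by
  intro w hw w' hw' huw
  have h := eq_or_forceTime_lt_of_forces hB hw (hu w hw) (huw ▸ (hu w' hw').2.1)
  have h' := eq_or_forceTime_lt_of_forces hB hw' (hu w' hw') (huw ▸ (hu w hw).2.1)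
  rcases h with h | h
  · exact h.symm
  · exact h'.resolve_right (lt_asymm h)

lemma compl_forcersUpTo_subset_dstep_flip (s : ℕ) :
    (forcersUpTo A B u s)ᶜ ⊆ dstep (flip A) (forcersUpTo A B u (s + 1))ᶜ := by
  intro v hv
  by_cases hv' : v ∈ (forcersUpTo A B u (s + 1))ᶜ
  · exact Or.inl hv'
  obtain ⟨w, ⟨hw, hws⟩, rfl⟩ := not_not.mp hv'
  have hws' : forceTime A B w = s + 1 := by
    by_contra hne
    exact hv ⟨w, ⟨hw, by omega⟩, rfl⟩
  refine Or.inr ⟨w, ?_, (hu w hw).2.1, ?_⟩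
  · rintro ⟨w', ⟨hw', hw's⟩, rfl⟩
    have := forceTime_lt_of_forces hB hw' (hu w' hw')
    omega
  · intro x hxw hx
    obtain ⟨w', ⟨hw', hw's⟩, rfl⟩ := not_not.mp hx
    rcases eq_or_forceTime_lt_of_forces hB hw' (hu w' hw') hxw with rfl | hlt
    · rfl
    · omega

lemma compl_forcersUpTo_subset_iterate (r s : ℕ) :
    (forcersUpTo A B u s)ᶜ ⊆ (dstep (flip A))^[r] (forcersUpTo A B u (s + r))ᶜ := by
  induction r generalizing s with
  | zero => exact subset_rfl
  | succ r ih =>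
    rw [iterate_succ_apply', ← add_assoc, add_right_comm]
    exact (compl_forcersUpTo_subset_dstep_flip hB hu s).trans (dstep_mono (ih (s + 1)))

end Reversal

theorem exists_iterate_dstep_flip_eq_univ {V : Type*} [Finite V] {A : V → V → Prop}
    {B : Set V} {t : ℕ} (hB : (dstep A)^[t] B = univ) :
    ∃ B' : Set V, B'.ncard = B.ncard ∧ (dstep (flip A))^[t] B' = univ := by
  choose! u hu using fun w (hw : w ∉ B) => exists_forces hB hw
  have hforcers : forcersUpTo A B u t = u '' Bᶜ := by
    simp only [forcersUpTo, forceTime_le hB, and_true]; rfl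
  refine ⟨(u '' Bᶜ)ᶜ, ?_, ?_⟩
  · have h₁ := ncard_add_ncard_compl (u '' Bᶜ)
    have h₂ := ncard_add_ncard_compl B
    rw [(injOn_forcer hB hu).ncard_image] at h₁
    omega
  · have hempty : forcersUpTo A B u 0 = ∅ := by
      refine image_eq_empty.2 (eq_empty_of_forall_notMem fun w ⟨hw, hw0⟩ => ?_)
      have := forceTime_pos hB hw
      omega
    rw [← hforcers, ← univ_subset_iff, ← compl_empty, ← hempty]
    simpa using compl_forcersUpTo_subset_iterate hB hu t 0

section Throttling

variable {V W : Type*} {A : V → V → Prop} {A' : W → W → Prop}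

lemma exists_isZFS_dth_eq (A : V → V → Prop) :
    ∃ B, IsZFS A B ∧ dth A = B.ncard + dpt A B :=
  Nat.sInf_mem (s := {k | ∃ B : Set V, IsZFS A B ∧ k = B.ncard + dpt A B})
    ⟨_, univ, ⟨0, rfl⟩, rfl⟩

lemma IsZFS.iterate_dpt {B : Set V} (h : IsZFS A B) : (dstep A)^[dpt A B] B = univ :=
  Nat.sInf_mem h

lemma dth_le_of_iterate_eq_univ {B : Set V} {t : ℕ} (h : (dstep A)^[t] B = univ) :
    dth A ≤ B.ncard + t :=
  calc dth A ≤ B.ncard + dpt A B :=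
        Nat.sInf_le (s := {k | ∃ B : Set V, IsZFS A B ∧ k = B.ncard + dpt A B})
          ⟨B, ⟨t, h⟩, rfl⟩
    _ ≤ B.ncard + t := Nat.add_le_add_left (Nat.sInf_le (s := {t | (dstep A)^[t] B = univ}) h) _

theorem dth_le_dth_of_forall_exists
    (h : ∀ (B : Set V) t, (dstep A)^[t] B = univ →
      ∃ B' : Set W, B'.ncard ≤ B.ncard ∧ (dstep A')^[t] B' = univ) :
    dth A' ≤ dth A := by
  obtain ⟨B, hB, hdth⟩ := exists_isZFS_dth_eq A
  obtain ⟨B', hcard, hB'⟩ := h B _ hB.iterate_dpt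
  rw [hdth]
  exact (dth_le_of_iterate_eq_univ hB').trans (by omega)

end Throttling

section DisjointUnion

variable {V W : Type*}

lemma semiconj_preimage_dstep {f : W → V} (hf : Injective f) {A : V → V → Prop}
    (hout : ∀ a y, A (f a) y → y ∈ range f) (hin : ∀ y b, A y (f b) → y ∈ range f) :
    Semiconj (preimage f) (dstep A) (dstep fun a b => A (f a) (f b)) := by
  intro S
  ext x
  constructor
  · rintro (h | ⟨u, hu, hux, huniq⟩)
    · exact Or.inl h
    · obtain ⟨a, rfl⟩ := hin u x hux
      exact Or.inr ⟨a, hu, hux, fun y hy hyS => hf (huniq (f y) hy hyS)⟩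
  · rintro (h | ⟨a, ha, hax, huniq⟩)
    · exact Or.inl h
    · refine Or.inr ⟨f a, ha, hax, fun y hy hyS => ?_⟩
      obtain ⟨b, rfl⟩ := hout a y hy
      exact congrArg f (huniq b hy hyS)

lemma iterate_dstep_dUnion_eq_univ_iff (A₁ : V → V → Prop) (A₂ : W → W → Prop)
    (S : Set (V ⊕ W)) (n : ℕ) :
    (dstep (dUnion A₁ A₂))^[n] S = univ ↔
      (dstep A₁)^[n] (Sum.inl ⁻¹' S) = univ ∧ (dstep A₂)^[n] (Sum.inr ⁻¹' S) = univ := by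
  have hinl : Semiconj (preimage Sum.inl) (dstep (dUnion A₁ A₂)) (dstep A₁) :=
    semiconj_preimage_dstep Sum.inl_injective
      (by rintro a (y | y) h; exacts [⟨y, rfl⟩, h.elim])
      (by rintro (y | y) b h; exacts [⟨y, rfl⟩, h.elim])
  have hinr : Semiconj (preimage Sum.inr) (dstep (dUnion A₁ A₂)) (dstep A₂) :=
    semiconj_preimage_dstep Sum.inr_injective
      (by rintro a (y | y) h; exacts [h.elim, ⟨y, rfl⟩])
      (by rintro (y | y) b h; exacts [h.elim, ⟨y, rfl⟩])
  rw [← hinl.iterate_right n S, ← hinr.iterate_right n S]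
  simp only [eq_univ_iff_forall, Sum.forall, mem_preimage]

lemma encard_eq_encard_preimage_inl_add_encard_preimage_inr (s : Set (V ⊕ W)) :
    s.encard = (Sum.inl ⁻¹' s).encard + (Sum.inr ⁻¹' s).encard := by
  conv_lhs => rw [← image_preimage_inl_union_image_preimage_inr s]
  rw [encard_union_eq disjoint_image_inl_image_inr, Sum.inl_injective.encard_image,
    Sum.inr_injective.encard_image]

lemma dth_dUnion_flip_le [Finite V] (A₁ : V → V → Prop) (A₂ : W → W → Prop) :
    dth (dUnion (flip A₁) A₂) ≤ dth (dUnion A₁ A₂) := by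
  refine dth_le_dth_of_forall_exists fun B t hB => ?_
  rw [iterate_dstep_dUnion_eq_univ_iff] at hB
  obtain ⟨B₁, hcard, hB₁⟩ := exists_iterate_dstep_flip_eq_univ hB.1
  have hpre := sumEquiv.apply_symm_apply (B₁, Sum.inr ⁻¹' B)
  simp only [sumEquiv_apply, Prod.mk.injEq] at hpre
  refine ⟨sumEquiv.symm (B₁, Sum.inr ⁻¹' B), le_of_eq ?_, ?_⟩
  · rw [ncard_def, ncard_def, encard_eq_encard_preimage_inl_add_encard_preimage_inr,
      encard_eq_encard_preimage_inl_add_encard_preimage_inr B, hpre.1, hpre.2,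
      ← (toFinite B₁).cast_ncard_eq, ← (toFinite (Sum.inl ⁻¹' B)).cast_ncard_eq, hcard]
  · rw [iterate_dstep_dUnion_eq_univ_iff, hpre.1, hpre.2]
    exact ⟨hB₁, hB.2⟩

end DisjointUnion

theorem stmt5_general {V₁ V₂ : Type*} [Fintype V₁]
    (A₁ : V₁ → V₁ → Prop) (A₂ : V₂ → V₂ → Prop) :
    dth (dUnion A₁ A₂) = dth (dUnion (flip A₁) A₂) :=
  le_antisymm (dth_dUnion_flip_le (flip A₁) A₂) (dth_dUnion_flip_le A₁ A₂)

/-- Transposing one component of a disjoint union does not change the throttling number. -/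
theorem stmt5 {V₁ V₂ : Type*} [Fintype V₁] [Fintype V₂]
    (A₁ : V₁ → V₁ → Prop) (A₂ : V₂ → V₂ → Prop)
    (h₁ : Irreflexive A₁) (h₂ : Irreflexive A₂) :
    dth (dUnion A₁ A₂) = dth (dUnion (flip A₁) A₂) :=
  stmt5_general A₁ A₂
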